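/- Let n ≥ 2, let e₁,…,eₙ be a Lagrangian basis of a tame lattice L ⊂ ℝⁿ with parameters a = ⟨e₁,e₁⟩, h = -⟨e₁,e₂⟩, v₁ = Σ eᵢ. Let r, s be integers with s = rh and 0 < |r| < n, and c = 1/(r(a+h)). Then ⟨r eᵢ + s v₁, c eⱼ⟩ = δ_{ij} for all i, j; in particular the dual of the lattice spanned by {r eᵢ + s v₁} is (1/(r(a+h)))·L. -/

import Mathlib

/-!
Expanding bilinearly, `⟪r eᵢ + s v₁, c eⱼ⟫ = c (r ⟪eᵢ, eⱼ⟫ + s)`, which is `c r (a + h)` for `i = j`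
and `c (s - r h) = 0` otherwise. It remains to see `a + h ≠ 0`: if `h = -a`, then `n a = 1`,
so `n s = -r`, i.e. `n ∣ r`, impossible for `0 < |r| < n`.
-/

open scoped RealInnerProductSpace

lemma add_ne_zero_of_sub_mul_eq_one {n : ℕ} {a h : ℝ} {r s : ℤ}
    (hah : a - h * (n - 1) = 1) (hs : (s : ℝ) = r * h) (hr : r ≠ 0) (hrn : |r| < n) :
    a + h ≠ 0 := by
  intro hsum
  have hna : (n : ℝ) * a = 1 := by linear_combination hah + (n - 1) * hsum
  have hsn : s * (n : ℤ) = -r := by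
    have : (s : ℝ) * n = -r := by linear_combination n * hs + r * n * hsum - r * hna
    exact_mod_cast this
  exact hr (Int.eq_zero_of_abs_lt_dvd ⟨-s, by linarith⟩ hrn)

lemma inner_smul_add_smul_smul {E : Type*} [NormedAddCommGroup E] [InnerProductSpace ℝ E]
    (r s c : ℝ) (x v y : E) :
    ⟪r • x + s • v, c • y⟫ = c * (r * ⟪x, y⟫ + s * ⟪v, y⟫) := by
  rw [inner_add_left, real_inner_smul_left, real_inner_smul_left, real_inner_smul_right,
    real_inner_smul_right]
  ring

theorem stmt_11 (n : ℕ) (a h : ℝ)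
    (e : Fin n → EuclideanSpace ℝ (Fin n))
    (hdiag : ∀ i, ⟪e i, e i⟫ = a)
    (hoff : ∀ i j, i ≠ j → ⟪e i, e j⟫ = -h)
    (v₁ : EuclideanSpace ℝ (Fin n))
    (hev : ∀ i, ⟪e i, v₁⟫ = 1)
    (hah : a - h * (n - 1) = 1)
    (r s : ℤ) (hs : (s : ℝ) = r * h) (hr : 0 < |r|) (hrn : |r| < n)
    (c : ℝ) (hc : c = 1 / (r * (a + h))) :
    ∀ i j, ⟪(r : ℝ) • e i + (s : ℝ) • v₁, c • e j⟫ = if i = j then 1 else 0 := by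
  have hr0 : r ≠ 0 := abs_pos.mp hr
  have hah0 : a + h ≠ 0 := add_ne_zero_of_sub_mul_eq_one hah hs hr0 hrn
  intro i j
  rw [inner_smul_add_smul_smul, real_inner_comm (e j) v₁, hev]
  split_ifs with hij
  · subst hij
    rw [hdiag, hc, hs]
    field_simp
  · rw [hoff i j hij, hs]
    ring
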